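/- For any real n×n matrix A, the infimum of ‖A − X‖_F² over all stable real n×n matrices X equals the infimum of ‖A − (J − R)Q‖_F² over all real n×n matrices J, R, Q with Jᵀ = −J, R positive semidefinite, and Q positive semidefinite. -/

import Mathlib

open Matrix

/-- The complexification of a real matrix. -/
noncomputable def toC {n : ℕ} (A : Matrix (Fin n) (Fin n) ℝ) : Matrix (Fin n) (Fin n) ℂ :=
  A.map (fun a => (a : ℂ))

/-- A real matrix is stable if every complex eigenvalue has nonpositive real part and
every purely imaginary eigenvalue is semisimple (generalized eigenspace = eigenspace). -/
def IsStable {n : ℕ} (A : Matrix (Fin n) (Fin n) ℝ) : Prop :=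
  ∀ μ : ℂ, (∃ x : Fin n → ℂ, x ≠ 0 ∧ toC A *ᵥ x = μ • x) →
    μ.re ≤ 0 ∧ (μ.re = 0 →
      ∀ x : Fin n → ℂ, ((toC A - μ • 1) ^ n) *ᵥ x = 0 ↔ (toC A - μ • 1) *ᵥ x = 0)

/-- The squared Frobenius norm of a real matrix. -/
def frobSq {n : ℕ} (A : Matrix (Fin n) (Fin n) ℝ) : ℝ := ∑ i, ∑ j, (A i j) ^ 2

/-!
If `Q ⪰ 0`, then `Q + εI ≻ 0` and `(J - R)(Q + εI)` is dissipative for the inner product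
`⟪x, y⟫ = x* (Q + εI) y`, since `Re ⟪x, (J - R)(Q + εI) x⟫ = -Re y* R y ≤ 0` for `y = (Q + εI) x`;
a matrix dissipative for some inner product has no eigenvalue in the right half plane and no
Jordan block on the imaginary axis, so it is stable. Conversely, if `X` is stable then the spectrum
of `B = X - εI` lies in the open left half plane. The Cayley transform `C = (B - 1)⁻¹ (B + 1)` then
has spectral radius `< 1`, so by Gelfand's formula `P = ∑ Cᵏ (Cᵏ)ᵀ` converges; it solves the Stein
equation `C P Cᵀ = P - 1`, which translates into the Lyapunov inequality `B P + P Bᵀ ⪯ 0` with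
`P ≻ 0`. Splitting `B P` into its skew-symmetric part `J` and its symmetric part `-R` gives
`B = (J - R) P⁻¹`. Both perturbations move `A - ·` by `O(ε)` in the Frobenius norm.
-/

open scoped MatrixOrder ComplexOrder

section Dissipative

variable {ι 𝕜 : Type*} [Fintype ι] [RCLike 𝕜]

lemma re_star_dotProduct_mulVec_self_eq_zero {J : Matrix ι ι 𝕜} (hJ : Jᴴ = -J) (y : ι → 𝕜) :
    RCLike.re (star y ⬝ᵥ J *ᵥ y) = 0 := by
  have h : star (star y ⬝ᵥ J *ᵥ y) = -(star y ⬝ᵥ J *ᵥ y) := by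
    rw [← star_dotProduct_star, star_star, star_mulVec, ← dotProduct_mulVec, hJ, neg_mulVec,
      dotProduct_neg]
  have := congrArg RCLike.re h
  rw [RCLike.star_def, RCLike.conj_re, map_neg] at this
  linarith

lemma re_star_dotProduct_mulVec_nonpos {J R Q : Matrix ι ι 𝕜} (hJ : Jᴴ = -J) (hR : R.PosSemidef)
    (hQ : Q.IsHermitian) (z : ι → 𝕜) :
    RCLike.re (star z ⬝ᵥ (Q * ((J - R) * Q)) *ᵥ z) ≤ 0 := by
  have hy : star z ⬝ᵥ (Q * ((J - R) * Q)) *ᵥ z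
      = star (Q *ᵥ z) ⬝ᵥ J *ᵥ (Q *ᵥ z) - star (Q *ᵥ z) ⬝ᵥ R *ᵥ (Q *ᵥ z) := by
    rw [star_mulVec, hQ.eq, ← dotProduct_sub, ← sub_mulVec, ← dotProduct_mulVec, mulVec_mulVec,
      mulVec_mulVec, Matrix.mul_assoc]
  rw [hy, map_sub, re_star_dotProduct_mulVec_self_eq_zero hJ]
  linarith [hR.re_dotProduct_nonneg (Q *ᵥ z)]

variable {M H : Matrix ι ι 𝕜} (hH : H.PosDef)
  (hM : ∀ z, RCLike.re (star z ⬝ᵥ (H * M) *ᵥ z) ≤ 0)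
include hH hM

lemma re_nonpos_of_mulVec_eq_smul {μ : 𝕜} {x : ι → 𝕜} (hx : x ≠ 0) (hμ : M *ᵥ x = μ • x) :
    RCLike.re μ ≤ 0 := by
  have h := hM x
  rw [← mulVec_mulVec, hμ, mulVec_smul, dotProduct_smul, smul_eq_mul, RCLike.mul_re,
    hH.isHermitian.im_star_dotProduct_mulVec_self, mul_zero, sub_zero] at h
  exact nonpos_of_mul_nonpos_left h (hH.re_dotProduct_pos hx)

lemma mulVec_sub_smul_eq_zero_of_sq [DecidableEq ι] {μ : 𝕜} (hμ : RCLike.re μ = 0) {w : ι → 𝕜}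
    (hw : (M - μ • 1) *ᵥ ((M - μ • 1) *ᵥ w) = 0) : (M - μ • 1) *ᵥ w = 0 := by
  set v := (M - μ • 1) *ᵥ w
  by_contra hv
  have hb := hH.re_dotProduct_pos hv
  set a := RCLike.re (star w ⬝ᵥ H *ᵥ v)
  set t := (1 - a) / RCLike.re (star v ⬝ᵥ H *ᵥ v)
  -- along `z = w + t v`, `Re ⟪z, H M z⟫ = a + t ⟪v, H v⟫`, which is `1` for this `t`
  have hMw : M *ᵥ w = μ • w + v := by
    simp only [v, sub_mulVec, smul_mulVec, one_mulVec, add_sub_cancel]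
  have hMv : M *ᵥ v = μ • v := by
    rwa [sub_mulVec, smul_mulVec, one_mulVec, sub_eq_zero] at hw
  have hMz : M *ᵥ (w + (t : 𝕜) • v) = μ • (w + (t : 𝕜) • v) + v := by
    rw [mulVec_add, mulVec_smul, hMw, hMv]
    module
  have h := hM (w + (t : 𝕜) • v)
  rw [← mulVec_mulVec, hMz, mulVec_add, mulVec_smul, dotProduct_add, dotProduct_smul, smul_eq_mul,
    map_add, RCLike.mul_re, hH.isHermitian.im_star_dotProduct_mulVec_self, hμ] at h
  simp only [star_add, star_smul, add_dotProduct, smul_dotProduct, RCLike.star_def,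
    RCLike.conj_ofReal, smul_eq_mul, map_add, RCLike.re_ofReal_mul] at h
  have : a + t * RCLike.re (star v ⬝ᵥ H *ᵥ v) = 1 := by
    simp only [t]; field_simp; ring
  linarith

end Dissipative

lemma mulVec_pow_eq_zero_iff {ι R : Type*} [Fintype ι] [DecidableEq ι] [CommRing R]
    {N : Matrix ι ι R} (hN : ∀ w, N *ᵥ (N *ᵥ w) = 0 → N *ᵥ w = 0) {k : ℕ} (hk : k ≠ 0)
    (x : ι → R) : (N ^ k) *ᵥ x = 0 ↔ N *ᵥ x = 0 := by
  induction k, Nat.one_le_iff_ne_zero.mpr hk using Nat.le_induction generalizing x with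
  | base => rw [pow_one]
  | succ k hk ih =>
    rw [pow_succ, ← mulVec_mulVec, ih (by omega)]
    exact ⟨hN x, fun h => by rw [h, mulVec_zero]⟩

lemma exists_mulVec_eq_smul_of_mem_spectrum {ι K : Type*} [Fintype ι] [DecidableEq ι] [Field K]
    {M : Matrix ι ι K} {μ : K} (hμ : μ ∈ spectrum K M) : ∃ x, x ≠ 0 ∧ M *ᵥ x = μ • x := by
  rw [← spectrum_toLin', ← Module.End.hasEigenvalue_iff_mem_spectrum] at hμ
  obtain ⟨x, hx⟩ := hμ.exists_hasEigenvector
  exact ⟨x, hx.2, by simpa using hx.apply_eq_smul⟩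

lemma Complex.norm_lt_one_of_re_add_one_div_sub_one_neg {μ : ℂ}
    (h : ((μ + 1) / (μ - 1)).re < 0) : ‖μ‖ < 1 := by
  rw [Complex.div_re, ← add_div] at h
  have hN := (div_neg_iff.mp h).elim (fun h => absurd h.2 (Complex.normSq_nonneg _).not_gt) id
  have : Complex.normSq μ < 1 := by
    simp only [Complex.add_re, Complex.sub_re, Complex.add_im, Complex.sub_im, Complex.one_re,
      Complex.one_im] at hN
    rw [Complex.normSq_apply]; nlinarith [hN.1]
  rwa [← Complex.sq_norm, sq_lt_one_iff₀ (norm_nonneg μ)] at this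

lemma isUnit_sub_one_of_forall_re_neg {A : Type*} [Ring A] [Algebra ℂ A] {b : A}
    (hb : ∀ ν ∈ spectrum ℂ b, ν.re < 0) : IsUnit (b - 1) := by
  have h1 := spectrum.notMem_iff.mp fun h => absurd (hb 1 h) (by norm_num)
  rw [map_one] at h1
  simpa using h1.neg

lemma norm_lt_one_of_mem_spectrum_cayley {A : Type*} [Ring A] [Algebra ℂ A] {b c : A}
    (hb : ∀ ν ∈ spectrum ℂ b, ν.re < 0) (hc : (b - 1) * c = b + 1) {μ : ℂ}
    (hμ : μ ∈ spectrum ℂ c) : ‖μ‖ < 1 := by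
  have key : (b - 1) * (algebraMap ℂ A μ - c) = (μ - 1) • b - algebraMap ℂ A (μ + 1) := by
    rw [mul_sub, hc, Algebra.algebraMap_eq_smul_one, Algebra.algebraMap_eq_smul_one,
      mul_smul_comm, mul_one]
    module
  have hnu : ¬IsUnit ((μ - 1) • b - algebraMap ℂ A (μ + 1)) := by
    rw [← key, ← (isUnit_sub_one_of_forall_re_neg hb).unit_spec, Units.isUnit_units_mul]
    exact spectrum.mem_iff.mp hμ
  rcases eq_or_ne μ 1 with rfl | hμ1
  · refine absurd ?_ hnu
    rw [sub_self, zero_smul, zero_sub]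
    exact ((IsUnit.mk0 (1 + 1 : ℂ) (by norm_num)).map (algebraMap ℂ A)).neg
  · refine Complex.norm_lt_one_of_re_add_one_div_sub_one_neg (hb _ (spectrum.mem_iff.mpr ?_))
    have hν : (1 - μ) * ((μ + 1) / (μ - 1)) = -(μ + 1) := by
      field_simp [sub_ne_zero.mpr hμ1]
      ring
    have : (μ - 1) • b - algebraMap ℂ A (μ + 1)
        = algebraMap ℂ A (1 - μ) * (algebraMap ℂ A ((μ + 1) / (μ - 1)) - b) := by
      rw [mul_sub, ← map_mul, hν, ← Algebra.smul_def, map_neg]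
      module
    rw [this] at hnu
    exact fun hu => hnu (((IsUnit.mk0 _ (sub_ne_zero.mpr hμ1.symm)).map _).mul hu)

open Filter in
lemma exists_lt_one_eventually_norm_pow_le {A : Type*} [NormedRing A] [NormedAlgebra ℂ A]
    [CompleteSpace A] {a : A} (ha : ∀ μ ∈ spectrum ℂ a, ‖μ‖ < 1) :
    ∃ r : ℝ, 0 ≤ r ∧ r < 1 ∧ ∀ᶠ k in atTop, ‖a ^ k‖ ≤ r ^ k := by
  rcases subsingleton_or_nontrivial A with hA | hA
  · exact ⟨0, le_rfl, one_pos, .of_forall fun k => by simp [Subsingleton.elim (a ^ k) 0]⟩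
  have hρ : spectralRadius ℂ a < 1 :=
    spectrum.spectralRadius_lt_of_forall_lt a fun μ hμ => by exact_mod_cast ha μ hμ
  obtain ⟨r, hρr, hr1⟩ := ENNReal.lt_iff_exists_nnreal_btwn.1 hρ
  refine ⟨r, r.2, by exact_mod_cast hr1, ?_⟩
  filter_upwards [(spectrum.pow_nnnorm_pow_one_div_tendsto_nhds_spectralRadius a).eventually
    (gt_mem_nhds hρr), eventually_ne_atTop 0] with k hk hk0
  rw [one_div] at hk
  have := ENNReal.pow_lt_pow_left hk0 hk
  rw [ENNReal.rpow_inv_natCast_pow hk0, ← ENNReal.coe_pow, ENNReal.coe_lt_coe] at this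
  exact_mod_cast this.le

lemma exists_posDef_mul_mul_transpose_eq_sub_one {ι : Type*} [Fintype ι] [DecidableEq ι]
    {C : Matrix ι ι ℝ} (hC : Summable fun k => C ^ k * (C ^ k)ᵀ) :
    ∃ X : Matrix ι ι ℝ, X.PosDef ∧ C * X * Cᵀ = X - 1 := by
  obtain ⟨X, hX⟩ := hC
  have hXT : Xᵀ = X := hX.matrix_transpose.unique (by simpa [transpose_mul] using hX)
  have hstein : C * X * Cᵀ = X - 1 := by
    have hshift := (hasSum_nat_add_iff' 1).mpr hX
    rw [Finset.sum_range_one, pow_zero, transpose_one, Matrix.mul_one] at hshift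
    refine ((hX.mul_left C).mul_right Cᵀ).unique ?_
    simpa [pow_succ', transpose_mul, Matrix.mul_assoc] using hshift
  refine ⟨X, .of_dotProduct_mulVec_pos hXT fun x hx => ?_, hstein⟩
  have hquad : HasSum (fun k => x ⬝ᵥ (C ^ k * (C ^ k)ᵀ) *ᵥ x) (x ⬝ᵥ X *ᵥ x) := by
    let q : Matrix ι ι ℝ →ₗ[ℝ] ℝ :=
      (LinearMap.applyₗ x).comp ((LinearMap.applyₗ x).comp (toLinearMap₂' ℝ).toLinearMap)
    simpa [q, Function.comp_def, toLinearMap₂'_apply'] using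
      hX.map q (LinearMap.continuous_of_finiteDimensional q)
  have h0 := le_hasSum hquad 0 fun k _ => by
    simpa using (posSemidef_self_mul_conjTranspose (C ^ k)).dotProduct_mulVec_nonneg x
  rw [star_trivial]
  simp only [pow_zero, transpose_one, Matrix.mul_one, one_mulVec] at h0
  exact (dotProduct_star_self_pos_iff.mpr hx).trans_le (by simpa using h0)

lemma exists_dissipativeHamiltonian_of_lyapunov {ι : Type*} [Fintype ι] [DecidableEq ι]
    {B X : Matrix ι ι ℝ} (hX : X.PosDef) (hL : (-(B * X + X * Bᵀ)).PosSemidef) :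
    ∃ J R Q : Matrix ι ι ℝ, Jᵀ = -J ∧ R.PosSemidef ∧ Q.PosSemidef ∧ (J - R) * Q = B := by
  have hXT : Xᵀ = X := hX.isHermitian
  refine ⟨(2⁻¹ : ℝ) • (B * X - X * Bᵀ), (2⁻¹ : ℝ) • -(B * X + X * Bᵀ), X⁻¹, ?_,
    hL.smul (by norm_num), hX.inv.posSemidef, ?_⟩
  · rw [transpose_smul, transpose_sub, transpose_mul, transpose_mul, transpose_transpose, hXT]
    module
  · have hJR : (2⁻¹ : ℝ) • (B * X - X * Bᵀ) - (2⁻¹ : ℝ) • -(B * X + X * Bᵀ) = B * X := by module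
    rw [hJR, mul_nonsing_inv_cancel_right _ _ (isUnit_iff_ne_zero.mpr hX.det_pos.ne')]

lemma csInf_le_csInf_of_forall_exists_lt_add {S T : Set ℝ} (hS : BddBelow S) (hT : T.Nonempty)
    (h : ∀ b ∈ T, ∀ δ > 0, ∃ a ∈ S, a < b + δ) : sInf S ≤ sInf T :=
  le_csInf hT fun b hb => le_of_forall_pos_le_add fun δ hδ => by
    obtain ⟨a, ha, hab⟩ := h b hb δ hδ
    exact (csInf_le hS ha).trans hab.le

variable {n : ℕ}

lemma toC_eq_mapMatrix (A : Matrix (Fin n) (Fin n) ℝ) :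
    toC A = (Algebra.ofId ℝ ℂ).mapMatrix A := rfl

lemma toC_add (A B : Matrix (Fin n) (Fin n) ℝ) : toC (A + B) = toC A + toC B :=
  map_add (Algebra.ofId ℝ ℂ).mapMatrix A B

lemma toC_sub (A B : Matrix (Fin n) (Fin n) ℝ) : toC (A - B) = toC A - toC B :=
  map_sub (Algebra.ofId ℝ ℂ).mapMatrix A B

lemma toC_neg (A : Matrix (Fin n) (Fin n) ℝ) : toC (-A) = -toC A :=
  map_neg (Algebra.ofId ℝ ℂ).mapMatrix A

lemma toC_one : toC (1 : Matrix (Fin n) (Fin n) ℝ) = 1 :=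
  map_one (Algebra.ofId ℝ ℂ).mapMatrix

lemma toC_mul (A B : Matrix (Fin n) (Fin n) ℝ) : toC (A * B) = toC A * toC B :=
  map_mul (Algebra.ofId ℝ ℂ).mapMatrix A B

lemma toC_pow (A : Matrix (Fin n) (Fin n) ℝ) (k : ℕ) : toC (A ^ k) = toC A ^ k :=
  map_pow (Algebra.ofId ℝ ℂ).mapMatrix A k

lemma conjTranspose_toC (A : Matrix (Fin n) (Fin n) ℝ) : (toC A)ᴴ = toC Aᵀ := by
  ext i j; simp [toC]

lemma det_toC (A : Matrix (Fin n) (Fin n) ℝ) : (toC A).det = A.det :=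
  (Complex.ofRealHom.map_det A).symm

lemma isUnit_toC_iff {A : Matrix (Fin n) (Fin n) ℝ} : IsUnit (toC A) ↔ IsUnit A := by
  simp [isUnit_iff_isUnit_det, det_toC]

lemma posSemidef_toC {R : Matrix (Fin n) (Fin n) ℝ} (hR : R.PosSemidef) : (toC R).PosSemidef := by
  obtain ⟨B, rfl⟩ := CStarAlgebra.nonneg_iff_eq_star_mul_self.mp hR.nonneg
  have := posSemidef_conjTranspose_mul_self (toC B)
  rwa [conjTranspose_toC, ← toC_mul] at this

lemma posDef_toC {Q : Matrix (Fin n) (Fin n) ℝ} (hQ : Q.PosDef) : (toC Q).PosDef :=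
  (posSemidef_toC hQ.posSemidef).posDef_iff_isUnit.mpr (isUnit_toC_iff.mpr hQ.isUnit)

lemma isStable_mul {J R Q : Matrix (Fin n) (Fin n) ℝ} (hJ : Jᵀ = -J) (hR : R.PosSemidef)
    (hQ : Q.PosDef) : IsStable ((J - R) * Q) := by
  have hQC := posDef_toC hQ
  have hdiss (z : Fin n → ℂ) : RCLike.re (star z ⬝ᵥ (toC Q * toC ((J - R) * Q)) *ᵥ z) ≤ 0 := by
    have hJC : (toC J)ᴴ = -toC J := by rw [conjTranspose_toC, hJ, toC_neg]
    simpa [toC_mul, toC_sub] using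
      re_star_dotProduct_mulVec_nonpos hJC (posSemidef_toC hR) hQC.isHermitian z
  rintro μ ⟨x, hx, hμ⟩
  refine ⟨re_nonpos_of_mulVec_eq_smul hQC hdiss hx hμ, fun hre x => ?_⟩
  rcases Nat.eq_zero_or_pos n with rfl | hn
  · simp [Subsingleton.elim x 0]
  · exact mulVec_pow_eq_zero_iff (fun _ => mulVec_sub_smul_eq_zero_of_sq hQC hdiss hre) hn.ne' x

lemma re_lt_zero_of_mem_spectrum_sub {X : Matrix (Fin n) (Fin n) ℝ} (hX : IsStable X) {ε : ℝ}
    (hε : 0 < ε) {μ : ℂ} (hμ : μ ∈ spectrum ℂ (toC (X - ε • 1))) : μ.re < 0 := by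
  have hshift : toC (X - ε • 1) = -algebraMap ℂ _ (ε : ℂ) + toC X := by
    simp only [toC_eq_mapMatrix, map_sub, map_smul, map_one, Algebra.algebraMap_eq_smul_one,
      Complex.coe_smul]
    abel
  rw [hshift, ← spectrum.add_mem_iff] at hμ
  have := (hX _ (exists_mulVec_eq_smul_of_mem_spectrum hμ)).1
  rw [Complex.add_re, Complex.ofReal_re] at this
  linarith

section Frobenius

attribute [local instance] Matrix.frobeniusNormedAddCommGroup Matrix.frobeniusNormedRing
  Matrix.frobeniusNormedAlgebra

lemma summable_pow_mul_transpose_pow {C : Matrix (Fin n) (Fin n) ℝ}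
    (hC : ∀ μ ∈ spectrum ℂ (toC C), ‖μ‖ < 1) : Summable fun k => C ^ k * (C ^ k)ᵀ := by
  obtain ⟨r, hr0, hr1, hr⟩ := exists_lt_one_eventually_norm_pow_le hC
  refine .of_norm_bounded_eventually_nat (summable_geometric_of_lt_one (sq_nonneg r)
    (by nlinarith)) (hr.mono fun k hk => ?_)
  have hnorm : ‖C ^ k‖ = ‖toC C ^ k‖ := by
    rw [← toC_pow, toC, frobenius_norm_map_eq _ _ Complex.norm_real]
  calc ‖C ^ k * (C ^ k)ᵀ‖ ≤ ‖C ^ k‖ * ‖(C ^ k)ᵀ‖ := norm_mul_le _ _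
    _ = ‖C ^ k‖ ^ 2 := by rw [frobenius_norm_transpose, sq]
    _ ≤ (r ^ k) ^ 2 := by gcongr; exact hnorm ▸ hk
    _ = (r ^ 2) ^ k := by ring

end Frobenius

lemma exists_posDef_lyapunov {B : Matrix (Fin n) (Fin n) ℝ}
    (hB : ∀ ν ∈ spectrum ℂ (toC B), ν.re < 0) :
    ∃ X : Matrix (Fin n) (Fin n) ℝ, X.PosDef ∧ (-(B * X + X * Bᵀ)).PosSemidef := by
  have hD : IsUnit (B - 1) := by
    rw [← isUnit_toC_iff, toC_sub, toC_one]
    exact isUnit_sub_one_of_forall_re_neg hB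
  set C := (B - 1)⁻¹ * (B + 1)
  have hDC : (B - 1) * C = B + 1 :=
    mul_nonsing_inv_cancel_left _ _ ((isUnit_iff_isUnit_det _).mp hD)
  have hC : ∀ μ ∈ spectrum ℂ (toC C), ‖μ‖ < 1 := by
    have := congrArg toC hDC
    rw [toC_mul, toC_sub, toC_add, toC_one] at this
    exact fun μ => norm_lt_one_of_mem_spectrum_cayley hB this
  obtain ⟨X, hX, hstein⟩ :=
    exists_posDef_mul_mul_transpose_eq_sub_one (summable_pow_mul_transpose_pow hC)
  refine ⟨X, hX, ?_⟩
  -- conjugating the Stein equation of `C` by `B - 1` gives `2 (B X + X Bᵀ) = -(B - 1) (B - 1)ᵀ`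
  have key : (B + 1) * X * (B + 1)ᵀ = (B - 1) * (X - 1) * (B - 1)ᵀ := by
    rw [← hstein, ← hDC]
    simp only [transpose_mul, Matrix.mul_assoc]
  have hL : -(B * X + X * Bᵀ) = (2⁻¹ : ℝ) • ((B - 1) * (B - 1)ᴴ) := by
    have : (2 : ℝ) • (-(B * X + X * Bᵀ)) - (B - 1) * (B - 1)ᵀ
        = (B - 1) * (X - 1) * (B - 1)ᵀ - (B + 1) * X * (B + 1)ᵀ := by
      simp only [transpose_sub, transpose_add, transpose_one, two_smul]
      noncomm_ring
    rw [key, sub_self, sub_eq_zero] at this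
    rw [conjTranspose_eq_transpose_of_trivial, ← this, smul_smul]
    norm_num
  rw [hL]
  exact (posSemidef_self_mul_conjTranspose _).smul (by norm_num)

lemma frobSq_nonneg (A : Matrix (Fin n) (Fin n) ℝ) : 0 ≤ frobSq A := by
  unfold frobSq; positivity

lemma exists_pos_frobSq_add_smul_lt (Y Z : Matrix (Fin n) (Fin n) ℝ) {δ : ℝ} (hδ : 0 < δ) :
    ∃ ε : ℝ, 0 < ε ∧ frobSq (Y + ε • Z) < frobSq Y + δ := by
  have hcont : Continuous fun ε : ℝ => frobSq (Y + ε • Z) := by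
    unfold frobSq; fun_prop
  have hlim : Filter.Tendsto (fun ε : ℝ => frobSq (Y + ε • Z)) (nhdsWithin 0 (Set.Ioi 0))
      (nhds (frobSq Y)) :=
    (hcont.tendsto' 0 _ (by simp)).mono_left nhdsWithin_le_nhds
  obtain ⟨ε, hlt, hε⟩ := ((hlim.eventually (gt_mem_nhds (lt_add_of_pos_right _ hδ))).and
    self_mem_nhdsWithin).exists
  exact ⟨ε, hε, hlt⟩

lemma exists_isStable_frobSq_sub_lt (A : Matrix (Fin n) (Fin n) ℝ)
    {J R Q : Matrix (Fin n) (Fin n) ℝ} (hJ : Jᵀ = -J) (hR : R.PosSemidef) (hQ : Q.PosSemidef)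
    {δ : ℝ} (hδ : 0 < δ) :
    ∃ X, IsStable X ∧ frobSq (A - X) < frobSq (A - (J - R) * Q) + δ := by
  obtain ⟨ε, hε, hlt⟩ := exists_pos_frobSq_add_smul_lt (A - (J - R) * Q) (-(J - R)) hδ
  have hQε : (Q + ε • 1).PosDef := PosDef.posSemidef_add hQ (.smul .one hε)
  refine ⟨(J - R) * (Q + ε • 1), isStable_mul hJ hR hQε, ?_⟩
  convert hlt using 2
  rw [Matrix.mul_add, Matrix.mul_smul, Matrix.mul_one]
  module

lemma exists_dissipativeHamiltonian_frobSq_sub_lt (A : Matrix (Fin n) (Fin n) ℝ)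
    {X : Matrix (Fin n) (Fin n) ℝ} (hX : IsStable X) {δ : ℝ} (hδ : 0 < δ) :
    ∃ J R Q : Matrix (Fin n) (Fin n) ℝ, Jᵀ = -J ∧ R.PosSemidef ∧ Q.PosSemidef ∧
      frobSq (A - (J - R) * Q) < frobSq (A - X) + δ := by
  obtain ⟨ε, hε, hlt⟩ := exists_pos_frobSq_add_smul_lt (A - X) 1 hδ
  obtain ⟨P, hP, hL⟩ := exists_posDef_lyapunov fun _ => re_lt_zero_of_mem_spectrum_sub hX hε
  obtain ⟨J, R, Q, hJ, hR, hQ, hB⟩ := exists_dissipativeHamiltonian_of_lyapunov hP hL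
  refine ⟨J, R, Q, hJ, hR, hQ, ?_⟩
  convert hlt using 2
  rw [hB]
  module

theorem dist_stable_eq_dist_DH {n : ℕ} (A : Matrix (Fin n) (Fin n) ℝ) :
    sInf {v : ℝ | ∃ X : Matrix (Fin n) (Fin n) ℝ, IsStable X ∧ v = frobSq (A - X)} =
      sInf {v : ℝ | ∃ J R Q : Matrix (Fin n) (Fin n) ℝ,
        Jᵀ = -J ∧ R.PosSemidef ∧ Q.PosSemidef ∧ v = frobSq (A - (J - R) * Q)} := by
  apply le_antisymm
  · refine csInf_le_csInf_of_forall_exists_lt_add ⟨0, ?_⟩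
      ⟨_, 0, 0, 0, by simp, .zero, .zero, rfl⟩ ?_
    · rintro _ ⟨X, -, rfl⟩
      exact frobSq_nonneg _
    · rintro _ ⟨J, R, Q, hJ, hR, hQ, rfl⟩ δ hδ
      obtain ⟨X, hX, hlt⟩ := exists_isStable_frobSq_sub_lt A hJ hR hQ hδ
      exact ⟨_, ⟨X, hX, rfl⟩, hlt⟩
  · refine csInf_le_csInf_of_forall_exists_lt_add ⟨0, ?_⟩
      ⟨_, _, isStable_mul (J := 0) (by simp) .zero .one, rfl⟩ ?_
    · rintro _ ⟨J, R, Q, -, -, -, rfl⟩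
      exact frobSq_nonneg _
    · rintro _ ⟨X, hX, rfl⟩ δ hδ
      obtain ⟨J, R, Q, hJ, hR, hQ, hlt⟩ := exists_dissipativeHamiltonian_frobSq_sub_lt A hX hδ
      exact ⟨_, ⟨J, R, Q, hJ, hR, hQ, rfl⟩, hlt⟩
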